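/- If B ⊆ 𝔽ⁿ is finite and P-independent and a ∈ 𝔽ⁿ ∖ B̄, then B ∪ {a} is P-independent. Consequently, a finite subset B of a finitely generated P-closed set Ω ⊆ 𝔽ⁿ is a P-basis of Ω if and only if B is a maximal P-independent subset of Ω (i.e., B is P-independent and whenever B ⊆ G ⊆ Ω with G P-independent, then G = B). -/

import Mathlib

/- Common setup: free multivariate skew polynomial rings over a division ring. -/

open Matrix Finsupp

/-- The underlying left `𝔽`-module of the free multivariate skew polynomial ring:
the free left `𝔽`-module with basis the free monoid on `n` symbols. -/
abbrev SkewPoly (𝔽 : Type*) [DivisionRing 𝔽] (n : ℕ) : Type _ := FreeMonoid (Fin n) →₀ 𝔽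

namespace SkewPoly

variable {𝔽 : Type*} [DivisionRing 𝔽] {n : ℕ}

/-- The variable `xᵢ` as a skew polynomial. -/
noncomputable def X (𝔽 : Type*) [DivisionRing 𝔽] {n : ℕ} (i : Fin n) : SkewPoly 𝔽 n :=
  Finsupp.single (FreeMonoid.of i) 1

/-- The constant `a` as a skew polynomial (coefficient on the empty word). -/
noncomputable def C {𝔽 : Type*} [DivisionRing 𝔽] (n : ℕ) (a : 𝔽) :
    SkewPoly 𝔽 n := Finsupp.single 1 a

/-- The degree of a skew polynomial: the maximal length of a word in its support
(`⊥` for the zero polynomial). -/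
noncomputable def deg (F : SkewPoly 𝔽 n) : WithBot ℕ :=
  F.support.sup fun m => ((FreeMonoid.length m : ℕ) : WithBot ℕ)

/-- A matrix morphism `σ : 𝔽 → Mₙ(𝔽)`: a unital ring homomorphism. -/
def IsMatrixMorphism (σ : 𝔽 → Matrix (Fin n) (Fin n) 𝔽) : Prop :=
  σ 1 = 1 ∧ (∀ a b : 𝔽, σ (a + b) = σ a + σ b) ∧ (∀ a b : 𝔽, σ (a * b) = σ a * σ b)

/-- A `σ`-vector derivation `δ : 𝔽 → 𝔽ⁿ`: additive with `δ(ab) = σ(a)δ(b) + δ(a)b`. -/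
def IsVectorDerivation (σ : 𝔽 → Matrix (Fin n) (Fin n) 𝔽) (δ : 𝔽 → Fin n → 𝔽) : Prop :=
  (∀ a b : 𝔽, δ (a + b) = δ a + δ b) ∧
    (∀ a b : 𝔽, δ (a * b) = σ a *ᵥ δ b + fun i => δ a i * b)

/-- A multiplication on the free module `SkewPoly 𝔽 n` making it a ring (with the
existing addition) whose identity is the empty word, which restricts to concatenation
on monomials, is additive on degrees of nonzero elements, and for which left
multiplication by constants is scalar multiplication. -/
structure RawMul (𝔽 : Type*) [DivisionRing 𝔽] (n : ℕ) where
  /-- the multiplication -/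
  mul : SkewPoly 𝔽 n → SkewPoly 𝔽 n → SkewPoly 𝔽 n
  mul_add : ∀ F G H : SkewPoly 𝔽 n, mul F (G + H) = mul F G + mul F H
  add_mul : ∀ F G H : SkewPoly 𝔽 n, mul (F + G) H = mul F H + mul G H
  mul_assoc : ∀ F G H : SkewPoly 𝔽 n, mul (mul F G) H = mul F (mul G H)
  one_mul : ∀ F : SkewPoly 𝔽 n, mul (C n 1) F = F
  mul_one : ∀ F : SkewPoly 𝔽 n, mul F (C n 1) = F
  mono_mul_mono : ∀ m m' : FreeMonoid (Fin n),
    mul (Finsupp.single m 1) (Finsupp.single m' 1) = Finsupp.single (m * m') 1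
  const_mul : ∀ (a : 𝔽) (F : SkewPoly 𝔽 n), mul (C n a) F = a • F
  deg_mul : ∀ F G : SkewPoly 𝔽 n, F ≠ 0 → G ≠ 0 → deg (mul F G) = deg F + deg G

/-- The multiplication `S` satisfies the commutation rule
`xᵢ a = Σⱼ σ_{i,j}(a) xⱼ + δᵢ(a)`. -/
def HasCommRule (S : RawMul 𝔽 n) (σ : 𝔽 → Matrix (Fin n) (Fin n) 𝔽)
    (δ : 𝔽 → Fin n → 𝔽) : Prop :=
  ∀ (i : Fin n) (a : 𝔽),
    S.mul (X 𝔽 i) (C n a) =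
      (∑ j : Fin n, Finsupp.single (FreeMonoid.of j) (σ a i j)) + C n (δ a i)

/-- `F = Σᵢ Gᵢ (xᵢ - aᵢ) + b`, i.e. `b` is a remainder of `F` upon right division
by `x₁ - a₁, …, xₙ - aₙ`; equivalently `F - b` lies in the left ideal generated by
the `xᵢ - aᵢ`. -/
def Decomposes (S : RawMul 𝔽 n) (a : Fin n → 𝔽) (F : SkewPoly 𝔽 n) (b : 𝔽) : Prop :=
  ∃ G : Fin n → SkewPoly 𝔽 n,
    F = (∑ i : Fin n, S.mul (G i) (X 𝔽 i - C n (a i))) + C n b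

/-- The evaluation of `F` at the point `a`: the unique `b ∈ 𝔽` such that `F - b`
lies in the left ideal generated by `x₁ - a₁, …, xₙ - aₙ`. -/
noncomputable def eval (S : RawMul 𝔽 n) (a : Fin n → 𝔽) (F : SkewPoly 𝔽 n) : 𝔽 :=
  letI := Classical.propDecidable (∃ b : 𝔽, Decomposes S a F b)
  if h : ∃ b : 𝔽, Decomposes S a F b then h.choose else 0

/-- The `(σ,δ)`-conjugate `a^c = σ(c) a c⁻¹ + δ(c) c⁻¹` of `a` with respect to `c`. -/
noncomputable def conj (σ : 𝔽 → Matrix (Fin n) (Fin n) 𝔽) (δ : 𝔽 → Fin n → 𝔽)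
    (a : Fin n → 𝔽) (c : 𝔽) : Fin n → 𝔽 :=
  fun i => (σ c *ᵥ a) i * c⁻¹ + δ c i * c⁻¹

/-- `I(Ω)`: the set of skew polynomials vanishing at every point of `Ω`. -/
def zeroIdeal (S : RawMul 𝔽 n) (Ω : Set (Fin n → 𝔽)) : Set (SkewPoly 𝔽 n) :=
  {F | ∀ a ∈ Ω, eval S a F = 0}

/-- The left ideal of `SkewPoly 𝔽 n` generated by `x₁ - a₁, …, xₙ - aₙ`
(the set of sums of left multiples of the generators). -/
def pointIdeal (S : RawMul 𝔽 n) (a : Fin n → 𝔽) : Set (SkewPoly 𝔽 n) :=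
  {F | ∃ G : Fin n → SkewPoly 𝔽 n, F = ∑ i : Fin n, S.mul (G i) (X 𝔽 i - C n (a i))}

/-- The P-closure `Ω̄ = Z(I(Ω))` of a set of points `Ω`. -/
def pClosure (S : RawMul 𝔽 n) (Ω : Set (Fin n → 𝔽)) : Set (Fin n → 𝔽) :=
  {a | ∀ F ∈ zeroIdeal S Ω, eval S a F = 0}

/-- `Ω` is P-closed if it equals its P-closure. -/
def IsPClosed (S : RawMul 𝔽 n) (Ω : Set (Fin n → 𝔽)) : Prop := pClosure S Ω = Ω

/-- `B` is P-independent: no point of `B` lies in the P-closure of the rest. -/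
def PIndep (S : RawMul 𝔽 n) (B : Set (Fin n → 𝔽)) : Prop :=
  ∀ a ∈ B, a ∉ pClosure S (B \ {a})

/-- `B` is a P-basis of `Ω`: a P-independent subset of `Ω` whose P-closure is `Ω`. -/
def IsPBasis (S : RawMul 𝔽 n) (B Ω : Set (Fin n → 𝔽)) : Prop :=
  B ⊆ Ω ∧ PIndep S B ∧ pClosure S B = Ω

/-- `Ω` is finitely generated: it is the P-closure of a finite subset of itself. -/
def FinGen (S : RawMul 𝔽 n) (Ω : Set (Fin n → 𝔽)) : Prop :=
  ∃ G : Set (Fin n → 𝔽), G.Finite ∧ G ⊆ Ω ∧ pClosure S G = Ω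

/-- The rank of a P-closed set: the (common) cardinality of its P-bases. -/
noncomputable def pRank (S : RawMul 𝔽 n) (Ω : Set (Fin n → 𝔽)) : ℕ :=
  sInf {k : ℕ | ∃ B : Finset (Fin n → 𝔽), IsPBasis S ↑B Ω ∧ B.card = k}

/-- The image of the evaluation map `E_Ω : R → 𝔽^Ω`, as a left `𝔽`-subspace of `𝔽^Ω`
(the span of the image; the image is itself a subspace since evaluation is left linear). -/
noncomputable def evalSpan (S : RawMul 𝔽 n) (Ω : Set (Fin n → 𝔽)) :
    Submodule 𝔽 (↥Ω → 𝔽) :=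
  Submodule.span 𝔽 (Set.range fun F : SkewPoly 𝔽 n => fun a : ↥Ω => eval S ↑a F)

/-- `I` is a two-sided ideal with respect to the multiplication `S`. -/
def IsTwoSidedIdealSet (S : RawMul 𝔽 n) (I : Set (SkewPoly 𝔽 n)) : Prop :=
  (0 : SkewPoly 𝔽 n) ∈ I ∧ (∀ F ∈ I, ∀ G ∈ I, F + G ∈ I) ∧ (∀ F ∈ I, -F ∈ I) ∧
    (∀ F ∈ I, ∀ G : SkewPoly 𝔽 n, S.mul G F ∈ I) ∧
    (∀ F ∈ I, ∀ G : SkewPoly 𝔽 n, S.mul F G ∈ I)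


/-- The left row-rank of the skew Vandermonde matrix `V_d(G)`: the dimension of the
left `𝔽`-span of its rows `(N_m(c))_{c ∈ G}`, indexed by the words `m` of length `< d`,
where `N_m(c)` is the evaluation of the monomial `m` at the point `c`. -/
noncomputable def vandermondeRank (S : RawMul 𝔽 n) (G : Finset (Fin n → 𝔽)) (d : ℕ) :
    Cardinal :=
  Module.rank 𝔽 ↥(Submodule.span 𝔽 (Set.range
    fun m : {m : FreeMonoid (Fin n) // FreeMonoid.length m < d} =>
      fun c : ↥G => eval S ↑c (Finsupp.single (m : FreeMonoid (Fin n)) (1 : 𝔽))))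

end SkewPoly

open SkewPoly

/-!
Evaluation at `a` is the left-linear map sending a word `m` to its norm `N_m(a)`: this map
kills every `G (xᵢ - aᵢ)`, and the norm recursion shows that each `F` is congruent to its value
modulo the left ideal generated by the `xᵢ - aᵢ`. Hence `b ∈ Ω̄` exactly when the kernel of
evaluation at `b` contains the intersection of the kernels of evaluation at the points of `Ω`.
Kernels of linear functionals over a division ring satisfy the exchange property: if
`K ⊓ ker f ≤ ker g` and `K ≰ ker g`, then `K ⊓ ker g ≤ ker f`. So P-closure is a matroid
closure, adjoining a point outside the closure preserves P-independence, and a P-basis is the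
same as a maximal P-independent subset.
-/

theorem LinearMap.inf_ker_le_ker_swap {R M : Type*} [DivisionRing R] [AddCommGroup M]
    [Module R M] {K : Submodule R M} {f g : M →ₗ[R] R} (hfg : K ⊓ ker f ≤ ker g)
    (hg : ¬K ≤ ker g) : K ⊓ ker g ≤ ker f := by
  rintro F ⟨hFK, hFg⟩
  by_contra hFf
  rw [mem_ker] at hFf
  refine hg fun H hH => ?_
  -- `H` minus a multiple of `F` lies in `K ⊓ ker f`, and `g` does not see the correction.
  have hH' : H - (f H * (f F)⁻¹) • F ∈ K ⊓ ker f :=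
    ⟨K.sub_mem hH (K.smul_mem _ hFK), by simp [mul_assoc, inv_mul_cancel₀ hFf]⟩
  simpa [mem_ker.mp hFg] using hfg hH'

namespace SkewPoly

variable {𝔽 : Type*} [DivisionRing 𝔽] {n : ℕ}

namespace RawMul

variable (S : RawMul 𝔽 n)

theorem zero_mul (G : SkewPoly 𝔽 n) : S.mul 0 G = 0 := by
  simpa using S.add_mul 0 0 G

theorem mul_zero (F : SkewPoly 𝔽 n) : S.mul F 0 = 0 := by
  simpa using S.mul_add F 0 0

theorem mul_sub (F G H : SkewPoly 𝔽 n) : S.mul F (G - H) = S.mul F G - S.mul F H :=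
  eq_sub_of_add_eq (by rw [← S.mul_add, sub_add_cancel])

theorem sum_mul {ι : Type*} (s : Finset ι) (f : ι → SkewPoly 𝔽 n) (H : SkewPoly 𝔽 n) :
    S.mul (∑ i ∈ s, f i) H = ∑ i ∈ s, S.mul (f i) H :=
  map_sum (AddMonoidHom.mk' (S.mul · H) fun F G => S.add_mul F G H) f s

theorem mul_sum {ι : Type*} (s : Finset ι) (F : SkewPoly 𝔽 n) (f : ι → SkewPoly 𝔽 n) :
    S.mul F (∑ i ∈ s, f i) = ∑ i ∈ s, S.mul F (f i) :=
  map_sum (AddMonoidHom.mk' (S.mul F) (S.mul_add F)) f s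

theorem smul_mul (c : 𝔽) (F G : SkewPoly 𝔽 n) : S.mul (c • F) G = c • S.mul F G := by
  rw [← S.const_mul, ← S.const_mul, S.mul_assoc]

theorem single_mul_single_one (m m' : FreeMonoid (Fin n)) (c : 𝔽) :
    S.mul (Finsupp.single m c) (Finsupp.single m' 1) = Finsupp.single (m * m') c := by
  rw [← smul_single_one, S.smul_mul, S.mono_mul_mono, smul_single_one]

end RawMul

variable {σ : 𝔽 → Matrix (Fin n) (Fin n) 𝔽} {δ : 𝔽 → Fin n → 𝔽}

theorem IsMatrixMorphism.map_zero (hσ : IsMatrixMorphism σ) : σ 0 = 0 := by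
  simpa using hσ.2.1 0 0

theorem IsVectorDerivation.map_zero (hδ : IsVectorDerivation σ δ) : δ 0 = 0 := by
  simpa using hδ.1 0 0

theorem IsVectorDerivation.map_one (hσ : IsMatrixMorphism σ) (hδ : IsVectorDerivation σ δ) :
    δ 1 = 0 := by
  have h := hδ.2 1 1
  rw [one_mul, hσ.1, one_mulVec] at h
  simpa using h

variable (σ δ)

/-- The norm `N_m(a)` of a word `m`: the value of the monomial `m` at the point `a`. -/
def wordNorm (a : Fin n → 𝔽) : List (Fin n) → 𝔽
  | [] => 1
  | j :: m => (σ (wordNorm a m) *ᵥ a) j + δ (wordNorm a m) j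

noncomputable def normEval (a : Fin n → 𝔽) : SkewPoly 𝔽 n →ₗ[𝔽] 𝔽 :=
  linearCombination 𝔽 fun m : FreeMonoid (Fin n) => wordNorm σ δ a m.toList

theorem normEval_single (a : Fin n → 𝔽) (m : FreeMonoid (Fin n)) (c : 𝔽) :
    normEval σ δ a (Finsupp.single m c) = c * wordNorm σ δ a m.toList := by
  simp [normEval]

theorem normEval_C (a : Fin n → 𝔽) (c : 𝔽) : normEval σ δ a (C n c) = c := by
  simp [C, normEval_single, wordNorm]

variable {σ δ}

variable (S : RawMul 𝔽 n)

def pointSubmodule (a : Fin n → 𝔽) : Submodule 𝔽 (SkewPoly 𝔽 n) where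
  carrier := pointIdeal S a
  add_mem' := by
    rintro _ _ ⟨G, rfl⟩ ⟨G', rfl⟩
    exact ⟨G + G', by simp only [Pi.add_apply, S.add_mul, Finset.sum_add_distrib]⟩
  zero_mem' := ⟨0, by simp only [Pi.zero_apply, S.zero_mul, Finset.sum_const_zero]⟩
  smul_mem' := by
    rintro c _ ⟨G, rfl⟩
    exact ⟨c • G, by simp only [Pi.smul_apply, S.smul_mul, Finset.smul_sum]⟩

theorem mul_mem_pointSubmodule {a : Fin n → 𝔽} (F : SkewPoly 𝔽 n) {P : SkewPoly 𝔽 n}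
    (hP : P ∈ pointSubmodule S a) : S.mul F P ∈ pointSubmodule S a := by
  obtain ⟨G, rfl⟩ := hP
  exact ⟨fun i => S.mul F (G i), by simp only [S.mul_sum, S.mul_assoc]⟩

theorem X_mul_C_sub_mem_pointSubmodule (hS : HasCommRule S σ δ) (a : Fin n → 𝔽) (j : Fin n)
    (c : 𝔽) : S.mul (X 𝔽 j) (C n c) - C n ((σ c *ᵥ a) j + δ c j) ∈ pointSubmodule S a := by
  rw [hS j c]
  refine ⟨fun k => C n (σ c j k), ?_⟩
  simp only [S.const_mul, smul_sub, Finset.sum_sub_distrib]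
  simp only [X, C, Finsupp.smul_single, smul_eq_mul, mul_one, mulVec, dotProduct,
    Finsupp.single_add, Finsupp.single_finsetSum]
  abel

theorem sub_C_normEval_mem_pointSubmodule (hS : HasCommRule S σ δ) (a : Fin n → 𝔽)
    (F : SkewPoly 𝔽 n) : F - C n (normEval σ δ a F) ∈ pointSubmodule S a := by
  induction F using Finsupp.induction_linear with
  | zero => simp [C]
  | add F G hF hG =>
    convert add_mem hF hG using 1
    simp only [map_add, C, Finsupp.single_add]
    abel
  | single m c =>
    suffices hm : Finsupp.single m 1 - C n (wordNorm σ δ a m.toList) ∈ pointSubmodule S a by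
      convert Submodule.smul_mem _ c hm using 1
      simp [normEval_single, C, smul_sub]
    induction m using FreeMonoid.recOn with
    | one => simp [C, wordNorm]
    | of_mul j m ih =>
      rw [FreeMonoid.toList_of_mul, wordNorm]
      convert add_mem (mul_mem_pointSubmodule S (X 𝔽 j) ih)
        (X_mul_C_sub_mem_pointSubmodule S hS a j (wordNorm σ δ a m.toList)) using 1
      rw [S.mul_sub, X, S.mono_mul_mono]
      abel

theorem X_mul_single (hS : HasCommRule S σ δ) (j : Fin n) (m : FreeMonoid (Fin n)) (c : 𝔽) :
    S.mul (X 𝔽 j) (Finsupp.single m c) =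
      ∑ k, Finsupp.single (FreeMonoid.of k * m) (σ c j k) + Finsupp.single m (δ c j) := by
  have hc : Finsupp.single m c = S.mul (C n c) (Finsupp.single m 1) := by
    rw [C, S.single_mul_single_one, one_mul]
  rw [hc, ← S.mul_assoc, hS j c, S.add_mul, S.sum_mul, C, S.single_mul_single_one, one_mul]
  simp only [S.single_mul_single_one]

theorem normEval_X_mul (hσ : IsMatrixMorphism σ) (hδ : IsVectorDerivation σ δ)
    (hS : HasCommRule S σ δ) (a : Fin n → 𝔽) (j : Fin n) (H : SkewPoly 𝔽 n) :
    normEval σ δ a (S.mul (X 𝔽 j) H) =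
      (σ (normEval σ δ a H) *ᵥ a) j + δ (normEval σ δ a H) j := by
  induction H using Finsupp.induction_linear with
  | zero => simp [S.mul_zero, hσ.map_zero, hδ.map_zero]
  | add F G hF hG =>
    rw [S.mul_add, map_add, map_add, hF, hG, hσ.2.1, hδ.1, add_mulVec]
    simp only [Pi.add_apply]
    abel
  | single m c =>
    rw [X_mul_single S hS, map_add, map_sum]
    simp only [normEval_single, FreeMonoid.toList_of_mul, wordNorm, hσ.2.2, hδ.2,
      ← mulVec_mulVec]
    simp only [mulVec, dotProduct, Pi.add_apply, mul_add, Finset.sum_add_distrib, add_assoc]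

theorem normEval_X (hσ : IsMatrixMorphism σ) (hδ : IsVectorDerivation σ δ)
    (hS : HasCommRule S σ δ) (a : Fin n → 𝔽) (i : Fin n) : normEval σ δ a (X 𝔽 i) = a i := by
  rw [← S.mul_one (X 𝔽 i), normEval_X_mul S hσ hδ hS, normEval_C, hσ.1, one_mulVec,
    hδ.map_one hσ, Pi.zero_apply, add_zero]

theorem normEval_mul_X_sub_C (hσ : IsMatrixMorphism σ) (hδ : IsVectorDerivation σ δ)
    (hS : HasCommRule S σ δ) (a : Fin n → 𝔽) (i : Fin n) (G : SkewPoly 𝔽 n) :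
    normEval σ δ a (S.mul G (X 𝔽 i - C n (a i))) = 0 := by
  induction G using Finsupp.induction_linear with
  | zero => rw [S.zero_mul, map_zero]
  | add F G hF hG => rw [S.add_mul, map_add, hF, hG, add_zero]
  | single m c =>
    rw [← smul_single_one, S.smul_mul, map_smul, smul_eq_zero]
    right
    induction m using FreeMonoid.recOn with
    | one => rw [← C, S.one_mul, map_sub, normEval_X S hσ hδ hS, normEval_C, sub_self]
    | of_mul j m ih =>
      rw [← S.mono_mul_mono, ← X, S.mul_assoc, normEval_X_mul S hσ hδ hS, ih, hσ.map_zero,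
        hδ.map_zero, zero_mulVec, Pi.zero_apply, add_zero]

theorem normEval_eq_zero_of_mem_pointSubmodule (hσ : IsMatrixMorphism σ)
    (hδ : IsVectorDerivation σ δ) (hS : HasCommRule S σ δ) {a : Fin n → 𝔽} {P : SkewPoly 𝔽 n}
    (hP : P ∈ pointSubmodule S a) : normEval σ δ a P = 0 := by
  obtain ⟨G, rfl⟩ := hP
  simp only [map_sum, normEval_mul_X_sub_C S hσ hδ hS, Finset.sum_const_zero]

theorem eval_eq_normEval (hσ : IsMatrixMorphism σ) (hδ : IsVectorDerivation σ δ)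
    (hS : HasCommRule S σ δ) (a : Fin n → 𝔽) (F : SkewPoly 𝔽 n) :
    eval S a F = normEval σ δ a F := by
  have hex : ∃ b, Decomposes S a F b := by
    obtain ⟨G, hG⟩ := sub_C_normEval_mem_pointSubmodule S hS a F
    exact ⟨_, G, by rw [← hG, sub_add_cancel]⟩
  obtain ⟨G, hG⟩ := hex.choose_spec
  rw [eval, dif_pos hex]
  have := congrArg (normEval σ δ a) hG
  rwa [map_add, normEval_eq_zero_of_mem_pointSubmodule S hσ hδ hS ⟨G, rfl⟩, zero_add,
    normEval_C, eq_comm] at this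

theorem mem_pClosure_iff (hσ : IsMatrixMorphism σ) (hδ : IsVectorDerivation σ δ)
    (hS : HasCommRule S σ δ) {Ω : Set (Fin n → 𝔽)} {x : Fin n → 𝔽} :
    x ∈ pClosure S Ω ↔
      ⨅ c ∈ Ω, LinearMap.ker (normEval σ δ c) ≤ LinearMap.ker (normEval σ δ x) := by
  simp [pClosure, zeroIdeal, eval_eq_normEval S hσ hδ hS, SetLike.le_def, Submodule.mem_iInf]

theorem subset_pClosure (Ω : Set (Fin n → 𝔽)) : Ω ⊆ pClosure S Ω :=
  fun _ ha _ hF => hF _ ha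

theorem pClosure_mono {Ω Ω' : Set (Fin n → 𝔽)} (h : Ω ⊆ Ω') : pClosure S Ω ⊆ pClosure S Ω' :=
  fun _ ha F hF => ha F fun c hc => hF c (h hc)

theorem mem_pClosure_insert_swap (hσ : IsMatrixMorphism σ) (hδ : IsVectorDerivation σ δ)
    (hS : HasCommRule S σ δ) {T : Set (Fin n → 𝔽)} {a b : Fin n → 𝔽}
    (hb : b ∈ pClosure S (insert a T)) (hbT : b ∉ pClosure S T) :
    a ∈ pClosure S (insert b T) := by
  rw [mem_pClosure_iff S hσ hδ hS, iInf_insert, inf_comm] at hb ⊢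
  rw [mem_pClosure_iff S hσ hδ hS] at hbT
  exact LinearMap.inf_ker_le_ker_swap hb hbT

variable {S}

theorem PIndep.insert (hσ : IsMatrixMorphism σ) (hδ : IsVectorDerivation σ δ)
    (hS : HasCommRule S σ δ) {B : Set (Fin n → 𝔽)} (hB : PIndep S B) {a : Fin n → 𝔽}
    (ha : a ∉ pClosure S B) : PIndep S (insert a B) := by
  rintro b (rfl | hbB)
  · exact fun hb => ha (pClosure_mono S (Set.sdiff_singleton_subset_iff.2 subset_rfl) hb)
  · have hba : b ≠ a := by
      rintro rfl
      exact ha (subset_pClosure S B hbB)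
    intro hb
    rw [← Set.insert_sdiff_singleton_comm hba.symm] at hb
    have := mem_pClosure_insert_swap S hσ hδ hS hb (hB b hbB)
    rw [Set.insert_sdiff_singleton, Set.insert_eq_of_mem hbB] at this
    exact ha this

theorem IsPBasis.eq_of_subset {B G Ω : Set (Fin n → 𝔽)} (hB : IsPBasis S B Ω) (hBG : B ⊆ G)
    (hGΩ : G ⊆ Ω) (hG : PIndep S G) : G = B := by
  refine Set.Subset.antisymm (fun g hg => ?_) hBG
  by_contra hgB
  refine hG g hg (pClosure_mono S (Set.subset_sdiff_singleton hBG hgB) ?_)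
  rw [hB.2.2]
  exact hGΩ hg

theorem isPBasis_of_maximal (hσ : IsMatrixMorphism σ) (hδ : IsVectorDerivation σ δ)
    (hS : HasCommRule S σ δ) {B Ω : Set (Fin n → 𝔽)} (hΩ : IsPClosed S Ω) (hBΩ : B ⊆ Ω)
    (hB : PIndep S B) (hmax : ∀ G, B ⊆ G → G ⊆ Ω → PIndep S G → G = B) :
    IsPBasis S B Ω := by
  refine ⟨hBΩ, hB, (hΩ ▸ pClosure_mono S hBΩ).antisymm fun w hw => ?_⟩
  by_contra hwB
  have := hmax _ (Set.subset_insert w B) (Set.insert_subset hw hBΩ) (hB.insert hσ hδ hS hwB)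
  exact hwB (subset_pClosure S B (this ▸ Set.mem_insert w B))

end SkewPoly

theorem stmt16_general {𝔽 : Type*} [DivisionRing 𝔽] {n : ℕ}
    (σ : 𝔽 → Matrix (Fin n) (Fin n) 𝔽) (δ : 𝔽 → Fin n → 𝔽)
    (hσ : IsMatrixMorphism σ) (hδ : IsVectorDerivation σ δ)
    (S : RawMul 𝔽 n) (hS : HasCommRule S σ δ) :
    (∀ B : Set (Fin n → 𝔽), B.Finite → PIndep S B →
      ∀ a : Fin n → 𝔽, a ∉ pClosure S B → PIndep S (insert a B)) ∧
    (∀ Ω B : Set (Fin n → 𝔽), IsPClosed S Ω → FinGen S Ω → B ⊆ Ω → B.Finite →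
      (IsPBasis S B Ω ↔
        (PIndep S B ∧
          ∀ G : Set (Fin n → 𝔽), B ⊆ G → G ⊆ Ω → PIndep S G → G = B))) :=
  ⟨fun _ _ hB _ ha => hB.insert hσ hδ hS ha,
    fun _ _ hΩ _ hBΩ _ =>
      ⟨fun hB => ⟨hB.2.1, fun _ => hB.eq_of_subset⟩,
        fun ⟨hB, hmax⟩ => isPBasis_of_maximal hσ hδ hS hΩ hBΩ hB hmax⟩⟩

/-- Adjoining to a finite P-independent set a point outside its
P-closure keeps it P-independent; consequently a finite subset of a finitely generated
P-closed set `Ω` is a P-basis of `Ω` iff it is a maximal P-independent subset of `Ω`. -/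
theorem stmt16 {𝔽 : Type*} [DivisionRing 𝔽] {n : ℕ} (hn : 0 < n)
    (σ : 𝔽 → Matrix (Fin n) (Fin n) 𝔽) (δ : 𝔽 → Fin n → 𝔽)
    (hσ : IsMatrixMorphism σ) (hδ : IsVectorDerivation σ δ)
    (S : RawMul 𝔽 n) (hS : HasCommRule S σ δ) :
    (∀ B : Set (Fin n → 𝔽), B.Finite → PIndep S B →
      ∀ a : Fin n → 𝔽, a ∉ pClosure S B → PIndep S (insert a B)) ∧
    (∀ Ω B : Set (Fin n → 𝔽), IsPClosed S Ω → FinGen S Ω → B ⊆ Ω → B.Finite →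
      (IsPBasis S B Ω ↔
        (PIndep S B ∧
          ∀ G : Set (Fin n → 𝔽), B ⊆ G → G ⊆ Ω → PIndep S G → G = B))) :=
  stmt16_general σ δ hσ hδ S hS
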